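/- (Corollary 2.3, second part) For integers n ≥ k ≥ 0 with n - k ≡ 0 (mod 2) and λ ∈ ℝ, the degenerate central factorial number of the second kind satisfies T_{2,λ}(n,k) = T_{n,k}(1,1,…,1|λ) = ∑ n!/(i₁!⋯i_{n-k+1}!) · ∏_{j=1}^{n-k+1} ( ((1/2)_{j,λ} - (-1)^j⟨1/2⟩_{j,λ}) / j! )^{i_j}, where the summation is over all nonnegative integers i₁,…,i_{n-k+1} with i₁+i₂+⋯+i_{n-k+1} = k and i₁+2i₂+⋯+(n-k+1)i_{n-k+1} = n. -/

import Mathlib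

open PowerSeries Finset Nat

/-- The degenerate falling factorial `(x)_{n,λ} = x(x-λ)⋯(x-(n-1)λ)`. -/
noncomputable def dFall (l x : ℝ) (n : ℕ) : ℝ := ∏ i ∈ Finset.range n, (x - i * l)

/-- The degenerate rising factorial `⟨x⟩_{n,λ} = x(x+λ)⋯(x+(n-1)λ)`. -/
noncomputable def dRise (l x : ℝ) (n : ℕ) : ℝ := ∏ i ∈ Finset.range n, (x + i * l)

/-- The degenerate exponential formal power series `e_λ^x(t) = ∑_{n≥0} (x)_{n,λ} tⁿ/n!`. -/
noncomputable def degExp (l x : ℝ) : PowerSeries ℝ :=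
  PowerSeries.mk fun n => dFall l x n / (n ! : ℝ)

/-- Exponential of a formal power series `G` (with zero constant term):
`coeff n (exp G) = ∑_{k=0}^{n} (1/k!) coeff n (G^k)`. -/
noncomputable def expComp (G : PowerSeries ℝ) : PowerSeries ℝ :=
  PowerSeries.mk fun n =>
    ∑ k ∈ Finset.range (n + 1), (k ! : ℝ)⁻¹ * PowerSeries.coeff n (G ^ k)

/-- The series `∑_{m≥1} x_m (1)_{m,λ} t^m/m!`. -/
noncomputable def degBellSeries (l : ℝ) (x : ℕ → ℝ) : PowerSeries ℝ :=
  PowerSeries.mk fun m => if m = 0 then 0 else x m * dFall l 1 m / (m ! : ℝ)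

/-- The degenerate incomplete Bell polynomial `B_{n,k}(x₁,…,x_{n-k+1}|λ)`, defined by
`(1/k!)(∑_{m≥1} x_m (1)_{m,λ} t^m/m!)^k = ∑_{n≥k} B_{n,k}(x₁,…|λ) tⁿ/n!`. -/
noncomputable def degIncBell (l : ℝ) (x : ℕ → ℝ) (n k : ℕ) : ℝ :=
  (n ! : ℝ) * PowerSeries.coeff n ((k ! : ℝ)⁻¹ • (degBellSeries l x) ^ k)

/-- The degenerate complete Bell polynomial `B_n(x₁,…,x_n|λ)`, defined by
`exp(∑_{i≥1} x_i (1)_{i,λ} t^i/i!) = ∑_{n≥0} B_n(x₁,…,x_n|λ) tⁿ/n!`. -/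
noncomputable def degCompBell (l : ℝ) (x : ℕ → ℝ) (n : ℕ) : ℝ :=
  (n ! : ℝ) * PowerSeries.coeff n (expComp (degBellSeries l x))

/-- The degenerate Stirling numbers of the second kind `S_{2,λ}(n,k)`, defined by
`(1/k!)(e_λ(t)-1)^k = ∑_{n≥k} S_{2,λ}(n,k) tⁿ/n!`. -/
noncomputable def degStirling2 (l : ℝ) (n k : ℕ) : ℝ :=
  (n ! : ℝ) * PowerSeries.coeff n ((k ! : ℝ)⁻¹ • (degExp l 1 - 1) ^ k)

/-- The degenerate Bell polynomials `B_{n,λ}(x)`, defined by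
`exp(x(e_λ(t)-1)) = ∑_{n≥0} B_{n,λ}(x) tⁿ/n!`. -/
noncomputable def degBell (l x : ℝ) (n : ℕ) : ℝ :=
  (n ! : ℝ) * PowerSeries.coeff n (expComp (x • (degExp l 1 - 1)))

/-- The formal power series `log(1+t) = ∑_{n≥1} (-1)^{n+1} tⁿ/n`. -/
noncomputable def logOnePlus : PowerSeries ℝ :=
  PowerSeries.mk fun n => if n = 0 then 0 else (-1) ^ (n + 1) / (n : ℝ)

/-- The (signed) Stirling numbers of the first kind `S₁(n,k)`, defined by
`(1/k!)(log(1+t))^k = ∑_{n≥k} S₁(n,k) tⁿ/n!`. -/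
noncomputable def stirling1 (n k : ℕ) : ℝ :=
  (n ! : ℝ) * PowerSeries.coeff n ((k ! : ℝ)⁻¹ • logOnePlus ^ k)

/-- The series `∑_{m≥1} x_m ((1/2)_{m,λ} - (-1)^m ⟨1/2⟩_{m,λ}) t^m/m!`. -/
noncomputable def centralSeq (l : ℝ) (x : ℕ → ℝ) : PowerSeries ℝ :=
  PowerSeries.mk fun m => if m = 0 then 0 else
    x m * (dFall l (1 / 2) m - (-1) ^ m * dRise l (1 / 2) m) / (m ! : ℝ)

/-- The degenerate central incomplete Bell polynomial `T_{n,k}(x₁,…,x_{n-k+1}|λ)`. -/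
noncomputable def degCentIncBell (l : ℝ) (x : ℕ → ℝ) (n k : ℕ) : ℝ :=
  (n ! : ℝ) * PowerSeries.coeff n ((k ! : ℝ)⁻¹ • (centralSeq l x) ^ k)

/-- The degenerate central factorial numbers of the second kind `T_{2,λ}(n,k)`, defined by
`(1/k!)(e_λ^{1/2}(t) - e_λ^{-1/2}(t))^k = ∑_{n≥k} T_{2,λ}(n,k) tⁿ/n!`. -/
noncomputable def degCentFact2 (l : ℝ) (n k : ℕ) : ℝ :=
  (n ! : ℝ) * PowerSeries.coeff n
    ((k ! : ℝ)⁻¹ • (degExp l (1 / 2) - degExp l (-(1 / 2))) ^ k)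

/-- The degenerate central Bell polynomial `B^{(c)}_{n,λ}(x)`, defined by
`exp(x(e_λ^{1/2}(t)-e_λ^{-1/2}(t))) = ∑_{n≥0} B^{(c)}_{n,λ}(x) tⁿ/n!`. -/
noncomputable def degCentBellPoly (l x : ℝ) (n : ℕ) : ℝ :=
  (n ! : ℝ) * PowerSeries.coeff n
    (expComp (x • (degExp l (1 / 2) - degExp l (-(1 / 2)))))

/-- The degenerate central complete Bell polynomial `B_n^{(c)}(x₁,…,x_n|λ)`. -/
noncomputable def degCentCompBell (l : ℝ) (x : ℕ → ℝ) (n : ℕ) : ℝ :=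
  (n ! : ℝ) * PowerSeries.coeff n (expComp (centralSeq l x))

/-- The ordinary incomplete Bell polynomials `B_{n,k}(x₁,…,x_{n-k+1})`, defined by
`(1/k!)(∑_{m≥1} x_m t^m/m!)^k = ∑_{n≥k} B_{n,k}(x₁,…) tⁿ/n!`. -/
noncomputable def incBell (x : ℕ → ℝ) (n k : ℕ) : ℝ :=
  (n ! : ℝ) * PowerSeries.coeff n
    ((k ! : ℝ)⁻¹ • (PowerSeries.mk fun m => if m = 0 then 0 else x m / (m ! : ℝ)) ^ k)

/-- The set of tuples `(i₁,…,i_{n-k+1})` of nonnegative integers with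
`i₁+⋯+i_{n-k+1} = k` and `i₁+2i₂+⋯+(n-k+1)i_{n-k+1} = n`
(each such `i_j` is at most `n`, so no solution is cut off). -/
noncomputable def partIdx (n k : ℕ) : Finset (Fin (n - k + 1) → ℕ) :=
  (Fintype.piFinset fun _ => Finset.range (n + 1)).filter
    fun i => (∑ j, i j) = k ∧ (∑ j, (j.1 + 1) * i j) = n

/-- The set of tuples `(m₁,…,m_n)` of nonnegative integers with `m₁+2m₂+⋯+nm_n = n`. -/
noncomputable def partIdx' (n : ℕ) : Finset (Fin n → ℕ) :=
  (Fintype.piFinset fun _ => Finset.range (n + 1)).filter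
    fun m => (∑ j, (j.1 + 1) * m j) = n

/-!
Since `(-x)_{m,λ} = (-1)^m ⟨x⟩_{m,λ}`, the series `e_λ^{1/2}(t) - e_λ^{-1/2}(t)` is the series
`∑_{m≥1} ((1/2)_{m,λ} - (-1)^m ⟨1/2⟩_{m,λ}) t^m/m!` defining `T_{n,k}(1,1,…|λ)`, which gives the
first identity. For the explicit sum: if `f = X q`, the `n`-th coefficient of `f^k` is the
`(n-k)`-th coefficient of `q^k`, which only sees the truncation of `q` below degree `n-k+1`; the
multinomial theorem applied to that polynomial produces `k!/(i₁!⋯) ∏ f_j^{i_j}` summed over the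
stated index set.
-/

namespace Polynomial

variable {R α : Type*} [CommSemiring R]

theorem prod_monomial_pow (s : Finset α) (e : α → ℕ) (b : α → R) (i : α → ℕ) :
    ∏ j ∈ s, monomial (e j) (b j) ^ i j =
      monomial (∑ j ∈ s, e j * i j) (∏ j ∈ s, b j ^ i j) := by
  simp only [← C_mul_X_pow_eq_monomial, mul_pow, ← pow_mul, Finset.prod_mul_distrib, map_prod,
    map_pow, Finset.prod_pow_eq_pow_sum]

theorem coeff_sum_monomial_pow [DecidableEq α] (s : Finset α) (e : α → ℕ) (b : α → R)
    (k m : ℕ) :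
    ((∑ j ∈ s, monomial (e j) (b j)) ^ k).coeff m =
      ∑ i ∈ (s.piAntidiag k).filter (fun i => ∑ j ∈ s, e j * i j = m),
        (Nat.multinomial s i : R) * ∏ j ∈ s, b j ^ i j := by
  simp only [Finset.sum_pow_eq_sum_piAntidiag, prod_monomial_pow, ← C_eq_natCast,
    finsetSum_coeff, coeff_C_mul, coeff_monomial, Finset.sum_filter]
  refine Finset.sum_congr rfl fun i _ => ?_
  split_ifs <;> simp

end Polynomial

namespace PowerSeries

variable {R : Type*} [CommSemiring R]

theorem trunc_eq_sum_fin (N : ℕ) (f : R⟦X⟧) :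
    trunc N f = ∑ j : Fin N, Polynomial.monomial (j : ℕ) (coeff j f) := by
  rw [trunc_apply, Nat.Ico_zero_eq_range,
    Fin.sum_univ_eq_sum_range (fun j => Polynomial.monomial j (coeff j f))]

theorem coeff_pow_eq_coeff_trunc_pow (f : R⟦X⟧) (m k : ℕ) :
    coeff m (f ^ k) = (trunc (m + 1) f ^ k).coeff m := by
  rw [← coeff_coe_trunc_of_lt (Nat.lt_succ_self m), ← trunc_trunc_pow,
    coeff_coe_trunc_of_lt (Nat.lt_succ_self m), ← Polynomial.coe_pow, Polynomial.coeff_coe]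

theorem coeff_pow_of_constantCoeff_eq_zero {f : R⟦X⟧} (hf : constantCoeff f = 0) {n k : ℕ}
    (hkn : k ≤ n) :
    coeff n (f ^ k) =
      ∑ i ∈ (univ.piAntidiag k).filter
          (fun i : Fin (n - k + 1) → ℕ => ∑ j, j.1 * i j = n - k),
        (Nat.multinomial univ i : R) * ∏ j, coeff (j.1 + 1) f ^ i j := by
  obtain ⟨q, rfl⟩ := X_dvd_iff.mpr hf
  simp only [mul_pow, coeff_X_pow_mul', if_pos hkn, coeff_pow_eq_coeff_trunc_pow,
    trunc_eq_sum_fin, Polynomial.coeff_sum_monomial_pow, coeff_succ_X_mul]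

end PowerSeries

theorem partIdx_eq_filter_piAntidiag {n k : ℕ} (hkn : k ≤ n) :
    partIdx n k = (univ.piAntidiag k).filter
      (fun i : Fin (n - k + 1) → ℕ => ∑ j, j.1 * i j = n - k) := by
  ext i
  have hweight : ∑ j, (j.1 + 1) * i j = ∑ j, j.1 * i j + univ.sum i := by
    simp only [add_mul, one_mul, Finset.sum_add_distrib]
  have hle : ∀ j, i j ≤ univ.sum i := fun j => Finset.single_le_sum (by simp) (mem_univ j)
  have heta : ∑ j, i j = univ.sum i := rfl
  simp only [partIdx, mem_filter, Fintype.mem_piFinset, mem_range, mem_piAntidiag,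
    mem_univ, implies_true, and_true, hweight]
  constructor
  · rintro ⟨-, hsum, hw⟩
    omega
  · rintro ⟨hsum, hw⟩
    exact ⟨fun j => by have := hle j; omega, hsum, by omega⟩

theorem factorial_mul_coeff_smul_pow_eq_sum_partIdx {K : Type*} [Field K] [CharZero K] {f : K⟦X⟧}
    (hf : constantCoeff f = 0) {n k : ℕ} (hkn : k ≤ n) :
    (n ! : K) * coeff n ((k ! : K)⁻¹ • f ^ k) =
      ∑ i ∈ partIdx n k, ((n ! : K) / ∏ j, ((i j)! : K)) * ∏ j, coeff (j.1 + 1) f ^ i j := by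
  rw [coeff_smul, coeff_pow_of_constantCoeff_eq_zero hf hkn, smul_eq_mul, Finset.mul_sum,
    Finset.mul_sum, partIdx_eq_filter_piAntidiag hkn]
  refine Finset.sum_congr rfl fun i hi => ?_
  have hspec : (∏ j, ((i j)! : K)) * Nat.multinomial univ i = k ! := by
    have := Nat.multinomial_spec univ i
    rw [(mem_piAntidiag.mp (mem_filter.mp hi).1).1] at this
    exact_mod_cast this
  have hmult : (Nat.multinomial univ i : K) ≠ 0 :=
    Nat.cast_ne_zero.mpr (Nat.multinomial_pos _ _).ne'
  have hprod : (∏ j, ((i j)! : K)) ≠ 0 :=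
    Finset.prod_ne_zero_iff.mpr fun j _ => Nat.cast_ne_zero.mpr (factorial_ne_zero _)
  rw [← hspec]
  field_simp

theorem dFall_neg (l x : ℝ) (m : ℕ) : dFall l (-x) m = (-1) ^ m * dRise l x m := by
  calc ∏ i ∈ range m, (-x - i * l) = ∏ i ∈ range m, -(x + i * l) :=
        Finset.prod_congr rfl fun i _ => by ring
    _ = (-1) ^ m * dRise l x m := by rw [Finset.prod_neg, Finset.card_range, dRise]

theorem constantCoeff_centralSeq (l : ℝ) (x : ℕ → ℝ) : constantCoeff (centralSeq l x) = 0 :=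
  rfl

theorem coeff_succ_centralSeq (l : ℝ) (x : ℕ → ℝ) (m : ℕ) :
    coeff (m + 1) (centralSeq l x) =
      x (m + 1) * (dFall l (1 / 2) (m + 1) - (-1) ^ (m + 1) * dRise l (1 / 2) (m + 1)) /
        ((m + 1)! : ℝ) := by
  simp [centralSeq]

theorem centralSeq_one (l : ℝ) :
    centralSeq l (fun _ => 1) = degExp l (1 / 2) - degExp l (-(1 / 2)) := by
  ext (_ | m)
  · simp [centralSeq, degExp, dFall]
  · rw [coeff_succ_centralSeq, map_sub, degExp, degExp, coeff_mk, coeff_mk, dFall_neg, one_mul,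
      sub_div]

theorem degCentFact2_eq_degCentIncBell_one_general (l : ℝ) (n k : ℕ) (hkn : k ≤ n) :
    degCentFact2 l n k = degCentIncBell l (fun _ => 1) n k ∧
      degCentFact2 l n k =
        ∑ i ∈ partIdx n k,
          ((n ! : ℝ) / ∏ j, ((i j)! : ℝ)) *
            ∏ j, ((dFall l (1 / 2) (j.1 + 1) -
                (-1) ^ (j.1 + 1) * dRise l (1 / 2) (j.1 + 1)) / ((j.1 + 1)! : ℝ)) ^ i j := by
  have hdeg : degCentFact2 l n k = degCentIncBell l (fun _ => 1) n k := by
    rw [degCentFact2, degCentIncBell, centralSeq_one]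
  refine ⟨hdeg, ?_⟩
  simp only [hdeg, degCentIncBell, factorial_mul_coeff_smul_pow_eq_sum_partIdx
    (constantCoeff_centralSeq l _) hkn, coeff_succ_centralSeq, one_mul]

/-- Corollary 2.3, second part: `T_{2,λ}(n,k) = T_{n,k}(1,…,1|λ)` together
with the explicit sum formula. -/
theorem degCentFact2_eq_degCentIncBell_one (l : ℝ) (n k : ℕ) (hkn : k ≤ n)
    (hpar : Even ((n : ℤ) - k)) :
    degCentFact2 l n k = degCentIncBell l (fun _ => 1) n k ∧
      degCentFact2 l n k =
        ∑ i ∈ partIdx n k,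
          ((n ! : ℝ) / ∏ j, ((i j)! : ℝ)) *
            ∏ j, ((dFall l (1 / 2) (j.1 + 1) -
                (-1) ^ (j.1 + 1) * dRise l (1 / 2) (j.1 + 1)) / ((j.1 + 1)! : ℝ)) ^ i j :=
  degCentFact2_eq_degCentIncBell_one_general l n k hkn
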